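/- For every real x > 0 and every real c > 0, the inverse Mellin integral (1/(2π)) ∫_{−∞}^{∞} Γ(c + it) · (1 − 2^{−(c+it)}) · ζ(1 + c + it) · x^{−(c+it)} dt converges absolutely and equals log(1 + e^{−x}), where Γ is the complex Gamma function and ζ is the Riemann zeta function. -/

import Mathlib

/-!
Expanding `log (1 + e^{-t}) = ∑ (-1)^n e^{-(n+1)t} / (n+1)` and taking Mellin transforms termwise
gives `Γ(s) η(s+1) = Γ(s) (1 - 2^{-s}) ζ(s+1)` for `Re s > 0`. On the line `Re s = c` this is
integrable: `s (s+1) Γ(s) = Γ(s+2)` together with `|Γ(s)| ≤ Γ(Re s)` makes `Γ` decay like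
`|s|^{-2}`, while `η(s+1)` is bounded by the absolutely convergent series. Since
`log (1 + e^{-t})` is continuous and its Mellin integral converges for `Re s > 0`, Mellin
inversion recovers it from the vertical integral.
-/

open MeasureTheory Complex Filter Set Asymptotics

namespace Complex

lemma norm_Gamma_le_Gamma_re {s : ℂ} (hs : 0 < s.re) : ‖Gamma s‖ ≤ Real.Gamma s.re := by
  rw [Gamma_eq_integral hs, GammaIntegral, Real.Gamma_eq_integral hs]
  refine (norm_integral_le_integral_norm _).trans_eq <|
    setIntegral_congr_fun measurableSet_Ioi fun t (ht : 0 < t) => ?_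
  rw [norm_mul, norm_real, Real.norm_of_nonneg (Real.exp_pos _).le,
    norm_cpow_eq_rpow_re_of_pos ht, sub_re, one_re]

lemma norm_sq_mul_norm_Gamma_le {s : ℂ} (hs : 0 < s.re) :
    ‖s‖ ^ 2 * ‖Gamma s‖ ≤ Real.Gamma (s.re + 2) := by
  have hs0 : s ≠ 0 := fun h => by simp [h] at hs
  have hs1 : s + 1 ≠ 0 := fun h => by
    have := congrArg re h
    simp only [add_re, one_re, zero_re] at this
    linarith
  have hle : ‖s‖ ≤ ‖s + 1‖ := by
    rw [← sq_le_sq₀ (norm_nonneg _) (norm_nonneg _), Complex.sq_norm, Complex.sq_norm,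
      normSq_apply, normSq_apply]
    simp only [add_re, one_re, add_im, one_im, add_zero]
    nlinarith
  calc ‖s‖ ^ 2 * ‖Gamma s‖ ≤ ‖s + 1‖ * ‖s‖ * ‖Gamma s‖ := by
        rw [sq]; gcongr
    _ = ‖Gamma (s + 2)‖ := by
        rw [show s + 2 = s + 1 + 1 by ring, Gamma_add_one _ hs1, Gamma_add_one _ hs0, norm_mul,
          norm_mul, mul_assoc]
    _ ≤ Real.Gamma (s.re + 2) := by
        simpa using norm_Gamma_le_Gamma_re (s := s + 2) (by simp; linarith)

lemma continuousOn_Gamma_re_pos : ContinuousOn Gamma {s | 0 < s.re} := fun s (hs : 0 < s.re) =>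
  (differentiableAt_Gamma s fun m h => by simp [h] at hs; linarith [m.cast_nonneg (α := ℝ)])
    |>.continuousAt.continuousWithinAt

lemma verticalIntegrable_Gamma {c : ℝ} (hc : 0 < c) : VerticalIntegrable Gamma c := by
  have hline : ∀ t : ℝ, ((c : ℂ) + t * I).re = c := fun t => by simp
  have hdom : Integrable fun t : ℝ => Real.Gamma (c + 2) / c ^ 2 * (1 + (t / c) ^ 2)⁻¹ :=
    (integrable_inv_one_add_sq.comp_div hc.ne').const_mul _
  refine hdom.mono' ?_ (Eventually.of_forall fun t => ?_)
  · exact (continuousOn_Gamma_re_pos.comp_continuous (by fun_prop) fun t => by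
      simp [hline, hc]).aestronglyMeasurable
  · have hnorm : ‖(c : ℂ) + t * I‖ ^ 2 = c ^ 2 * (1 + (t / c) ^ 2) := by
      rw [Complex.sq_norm, normSq_add_mul_I]; field_simp
    have := norm_sq_mul_norm_Gamma_le (s := (c : ℂ) + t * I) (by rw [hline]; exact hc)
    rw [hnorm, hline] at this
    calc ‖Gamma (c + t * I)‖
        = c ^ 2 * (1 + (t / c) ^ 2) * ‖Gamma (c + t * I)‖ / (c ^ 2 * (1 + (t / c) ^ 2)) := by
          field_simp
      _ ≤ Real.Gamma (c + 2) / (c ^ 2 * (1 + (t / c) ^ 2)) := by gcongr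
      _ = Real.Gamma (c + 2) / c ^ 2 * (1 + (t / c) ^ 2)⁻¹ := by
          rw [div_mul_eq_div_div, div_eq_mul_inv]

lemma VerticalIntegrable.integrable_cpow_neg_smul {E : Type*} [NormedAddCommGroup E]
    [NormedSpace ℂ E] {F : ℂ → E} {σ x : ℝ} (hF : VerticalIntegrable F σ) (hx : 0 < x) :
    Integrable fun y : ℝ => (x : ℂ) ^ (-(σ + y * I)) • F (σ + y * I) := by
  refine hF.bdd_smul (x ^ (-σ)) (Continuous.aestronglyMeasurable ?_)
    (Eventually.of_forall fun y => ?_)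
  · exact continuous_const.cpow (by fun_prop) fun _ => ofReal_mem_slitPlane.2 hx
  · rw [norm_cpow_eq_rpow_re_of_pos hx]
    simp

end Complex

/-- Only the Dirichlet eta function away from `z = 1`: at `z = 1` this gives `0`, not `log 2`. -/
noncomputable def dirichletEta (z : ℂ) : ℂ := (1 - 2 ^ (1 - z)) * riemannZeta z

lemma continuousAt_dirichletEta {z : ℂ} (hz : z ≠ 1) : ContinuousAt dirichletEta z :=
  ((continuous_const.sub (continuous_const.cpow (by fun_prop) fun _ => by simp)).continuousAt.mul
    (differentiableAt_riemannZeta hz).continuousAt)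

lemma hasSum_one_div_nat_add_one_cpow {z : ℂ} (hz : 1 < z.re) :
    HasSum (fun n : ℕ => 1 / ((n : ℂ) + 1) ^ z) (riemannZeta z) := by
  rw [zeta_eq_tsum_one_div_nat_add_one_cpow hz]
  refine Summable.hasSum ?_
  simpa using (summable_nat_add_iff 1).2 (Complex.summable_one_div_nat_cpow.2 hz)

lemma hasSum_dirichletEta {z : ℂ} (hz : 1 < z.re) :
    HasSum (fun n : ℕ => (-1) ^ n / ((n : ℂ) + 1) ^ z) (dirichletEta z) := by
  set a : ℕ → ℂ := fun n => 1 / ((n : ℂ) + 1) ^ z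
  have hζ : HasSum a (riemannZeta z) := hasSum_one_div_nat_add_one_cpow hz
  have hodd : ∀ k : ℕ, a (2 * k + 1) = 2 ^ (-z) * a k := fun k => by
    have : ((2 * k + 1 : ℕ) : ℂ) + 1 = ((2 : ℕ) : ℂ) * ((k + 1 : ℕ) : ℂ) := by
      push_cast; ring
    simp only [a]
    rw [this, natCast_mul_natCast_cpow, cpow_neg]
    push_cast
    field_simp
  -- `a n - (-1) ^ n a n` vanishes at even `n` and is `2 a n` at odd `n`
  have hdiff : HasSum (fun n => a n - (-1) ^ n * a n) (0 + 2 * 2 ^ (-z) * riemannZeta z) := by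
    refine HasSum.even_add_odd ?_ ((hζ.mul_left (2 * 2 ^ (-z))).congr_fun fun k => ?_)
    · simp [pow_mul, hasSum_zero]
    · rw [(Odd.neg_one_pow ⟨k, rfl⟩ : (-1 : ℂ) ^ (2 * k + 1) = -1), hodd]
      ring
  have htwo : (2 : ℂ) ^ (1 - z) = 2 * 2 ^ (-z) := by
    rw [sub_eq_add_neg, cpow_add _ _ two_ne_zero, cpow_one]
  rw [dirichletEta, htwo, show (1 - 2 * 2 ^ (-z)) * riemannZeta z
      = riemannZeta z - (0 + 2 * 2 ^ (-z) * riemannZeta z) by ring]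
  exact (hζ.sub hdiff).congr_fun fun n => by simp only [a]; ring

lemma norm_dirichletEta_le {z : ℂ} (hz : 1 < z.re) :
    ‖dirichletEta z‖ ≤ ∑' n : ℕ, 1 / ((n : ℝ) + 1) ^ z.re := by
  have hsum : Summable fun n : ℕ => 1 / ((n : ℝ) + 1) ^ z.re :=
    ((Real.summable_one_div_nat_add_rpow 1 z.re).2 hz).congr fun n => by
      rw [abs_of_pos n.cast_add_one_pos]
  refine (hasSum_dirichletEta hz).norm_le_of_bounded hsum.hasSum fun n => le_of_eq ?_
  rw [norm_div, norm_pow, norm_neg, norm_one, one_pow, ← Nat.cast_add_one,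
    norm_natCast_cpow_of_re_ne_zero _ (by linarith), Nat.cast_add_one]

lemma Real.hasSum_log_one_add_exp_neg {t : ℝ} (ht : 0 < t) :
    HasSum (fun n : ℕ => (-1) ^ n / (n + 1) * Real.exp (-(n + 1) * t))
      (Real.log (1 + Real.exp (-t))) := by
  have hlt : |-Real.exp (-t)| < 1 := by
    rw [abs_neg, abs_of_pos (Real.exp_pos _), Real.exp_lt_one_iff]
    linarith
  have h := (Real.hasSum_pow_div_log_of_abs_lt_one hlt).neg
  rw [sub_neg_eq_add, neg_neg] at h
  refine h.congr_fun fun n => ?_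
  rw [neg_pow (Real.exp _), ← Real.exp_nat_mul, pow_succ]
  push_cast
  ring_nf

lemma continuous_log_one_add_exp_neg :
    Continuous fun t : ℝ => (Real.log (1 + Real.exp (-t)) : ℂ) :=
  continuous_ofReal.comp <| (by fun_prop : Continuous fun t : ℝ => 1 + Real.exp (-t)).log
    fun t => by positivity

lemma norm_log_one_add_exp_neg_le (t : ℝ) :
    ‖(Real.log (1 + Real.exp (-t)) : ℂ)‖ ≤ Real.exp (-t) := by
  have hpos := Real.exp_pos (-t)
  rw [norm_real, Real.norm_of_nonneg (Real.log_nonneg (by linarith))]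
  linarith [Real.log_le_sub_one_of_pos (by linarith : 0 < 1 + Real.exp (-t))]

lemma mellinConvergent_log_one_add_exp_neg {s : ℂ} (hs : 0 < s.re) :
    MellinConvergent (fun t : ℝ => (Real.log (1 + Real.exp (-t)) : ℂ)) s := by
  refine mellinConvergent_of_isBigO_rpow_exp one_pos
    (continuous_log_one_add_exp_neg.locallyIntegrable.locallyIntegrableOn _) ?_ ?_ (b := 0) hs
  · refine IsBigO.of_bound 1 (Eventually.of_forall fun t => ?_)
    simpa using norm_log_one_add_exp_neg_le t
  · refine IsBigO.of_bound 1 (eventually_mem_nhdsWithin.mono fun t (ht : 0 < t) => ?_)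
    simpa using (norm_log_one_add_exp_neg_le t).trans (Real.exp_le_one_iff.2 (by linarith))

lemma mellin_log_one_add_exp_neg {s : ℂ} (hs : 0 < s.re) :
    mellin (fun t : ℝ => (Real.log (1 + Real.exp (-t)) : ℂ)) s
      = Gamma s * dirichletEta (s + 1) := by
  have hsum := hasSum_mellin (a := fun n : ℕ => (-1) ^ n / ((n : ℂ) + 1))
    (p := fun n : ℕ => (n : ℝ) + 1) (fun n => Or.inr n.cast_add_one_pos) hs
    (fun t ht => (hasSum_ofReal.2 (Real.hasSum_log_one_add_exp_neg ht)).congr_fun fun n => by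
      push_cast; rfl) ?_
  · have heta := (hasSum_dirichletEta (z := s + 1) (by simp; linarith)).mul_left (Gamma s)
    rw [hsum.unique (heta.congr_fun fun n => ?_)]
    have hn : ((n : ℂ) + 1) ≠ 0 := by exact_mod_cast n.succ_ne_zero
    push_cast
    rw [cpow_add _ _ hn, cpow_one]
    field_simp
  · refine ((Real.summable_one_div_nat_add_rpow 1 (s.re + 1)).2 (by linarith)).congr fun n => ?_
    have hn : (0 : ℝ) < n + 1 := n.cast_add_one_pos
    rw [abs_of_pos hn, Real.rpow_add hn, Real.rpow_one, norm_div, norm_pow, norm_neg, norm_one,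
      one_pow, ← ofReal_natCast, ← ofReal_one, ← ofReal_add, norm_real, Real.norm_of_nonneg hn.le,
      div_div, mul_comm]

lemma verticalIntegrable_Gamma_mul_dirichletEta {c : ℝ} (hc : 0 < c) :
    VerticalIntegrable (fun s => Gamma s * dirichletEta (s + 1)) c := by
  have hline : ∀ t : ℝ, ((c : ℂ) + t * I + 1).re = c + 1 := fun t => by simp
  refine (verticalIntegrable_Gamma hc).mul_bdd (c := ∑' n : ℕ, 1 / ((n : ℝ) + 1) ^ (c + 1))
    (Continuous.aestronglyMeasurable ?_) (Eventually.of_forall fun t => ?_)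
  · exact continuous_iff_continuousAt.2 fun t => (continuousAt_dirichletEta fun h =>
      hc.ne' (by simpa [h] using hline t)).comp (by fun_prop)
  · simpa [hline] using norm_dirichletEta_le (z := c + t * I + 1) (by rw [hline]; linarith)

/-- For `x > 0` and `c > 0`, the inverse Mellin integral
`(1/2π) ∫_ℝ Γ(c+it) (1 − 2^{−(c+it)}) ζ(1+c+it) x^{−(c+it)} dt` converges absolutely and
equals `log(1 + e^{−x})`. -/
theorem stmt8 (x c : ℝ) (hx : 0 < x) (hc : 0 < c) :
    Integrable (fun t : ℝ =>
      Complex.Gamma ((c : ℂ) + (t : ℂ) * Complex.I) *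
        (1 - (2 : ℂ) ^ (-((c : ℂ) + (t : ℂ) * Complex.I))) *
        riemannZeta (1 + (c : ℂ) + (t : ℂ) * Complex.I) *
        (x : ℂ) ^ (-((c : ℂ) + (t : ℂ) * Complex.I))) ∧
    (1 / (2 * (Real.pi : ℂ))) *
        ∫ t : ℝ, Complex.Gamma ((c : ℂ) + (t : ℂ) * Complex.I) *
          (1 - (2 : ℂ) ^ (-((c : ℂ) + (t : ℂ) * Complex.I))) *
          riemannZeta (1 + (c : ℂ) + (t : ℂ) * Complex.I) *
          (x : ℂ) ^ (-((c : ℂ) + (t : ℂ) * Complex.I))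
      = (Real.log (1 + Real.exp (-x)) : ℂ) := by
  set f : ℝ → ℂ := fun t => (Real.log (1 + Real.exp (-t)) : ℂ)
  have hmellin : ∀ t : ℝ,
      mellin f (c + t * I) = Gamma (c + t * I) * dirichletEta (c + t * I + 1) :=
    fun t => mellin_log_one_add_exp_neg (by simpa using hc)
  have hvert : VerticalIntegrable (mellin f) c :=
    (verticalIntegrable_Gamma_mul_dirichletEta hc).congr
      (Eventually.of_forall fun t => (hmellin t).symm)
  have hintegrand : (fun t : ℝ => Gamma (c + t * I) * (1 - 2 ^ (-(c + t * I))) *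
      riemannZeta (1 + c + t * I) * (x : ℂ) ^ (-(c + t * I)))
      = fun t : ℝ => (x : ℂ) ^ (-(c + t * I)) • mellin f (c + t * I) := by
    ext t
    rw [hmellin, dirichletEta, smul_eq_mul]
    ring_nf
  have hinv := mellinInv_mellin_eq c f hx (mellinConvergent_log_one_add_exp_neg (by simpa using hc))
    hvert continuous_log_one_add_exp_neg.continuousAt
  rw [hintegrand]
  refine ⟨hvert.integrable_cpow_neg_smul hx, ?_⟩
  rw [mellinInv, real_smul] at hinv
  push_cast at hinv
  exact hinv
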